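/- arXiv:1302.4694 — 9 statements merged into one kernel-verified Lean document; each statement's English description precedes it below -/
import Mathlib

section
/- Let K be a commutative ring with unity, let v, w : ℤ → K, and let α, β ∈ ℤ. For all integers n ≥ 1 and 0 ≤ k ≤ n, the V-Stirling numbers of the first kind satisfy the triangular recurrence c^V_{α,β}[n,k] = c^V_{α,β+1}[n-1,k-1] + v(α+n-1)·w(β)·c^V_{α,β+1}[n-1,k]. -/
open Finset Polynomial

variable {K : Type*} [CommRing K]

/-- Elementary symmetric function `e_t` of the entries of a list. -/
def esymmList : List K → ℕ → K
  | _, 0 => 1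
  | [], _ + 1 => 0
  | a :: l, t + 1 => a * esymmList l t + esymmList l (t + 1)

/-- Complete homogeneous symmetric function `h_t` of the entries of a list. -/
def hsymmList : List K → ℕ → K
  | _, 0 => 1
  | [], _ + 1 => 0
  | a :: l, t + 1 => a * hsymmList (a :: l) t + hsymmList l (t + 1)
  termination_by l t => (l.length, t)

/-- The V-Stirling number of the first kind
`c^V_{α,β}[n,k] = e_{n-k}(v(α+n-1)w(β), …, v(α)w(β+n-1))`,
set to `0` unless `0 ≤ k ≤ n`. -/
def cV (v w : ℤ → K) (α β n k : ℤ) : K :=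
  if 0 ≤ k ∧ k ≤ n then
    esymmList (List.ofFn fun j : Fin n.toNat =>
      v (α + n - 1 - (j : ℕ)) * w (β + (j : ℕ))) (n - k).toNat
  else 0

/-- The V-Stirling number of the second kind
`S^V_{α,β}[n,k] = h_{n-k}(v(α+k)w(β), …, v(α)w(β+k))`,
set to `0` unless `0 ≤ k ≤ n`. -/
def SV (v w : ℤ → K) (α β n k : ℤ) : K :=
  if 0 ≤ k ∧ k ≤ n then
    hsymmList (List.ofFn fun j : Fin (k.toNat + 1) =>
      v (α + k - (j : ℕ)) * w (β + (j : ℕ))) (n - k).toNat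
  else 0

lemma esymmList_eq_zero (l : List K) (t : ℕ) (h : l.length < t) : esymmList l t = 0 := by
  induction l generalizing t with
  | nil =>
    cases t with
    | zero => omega
    | succ t => rfl
  | cons a l ih =>
    cases t with
    | zero => omega
    | succ t =>
      simp only [List.length_cons, Nat.succ_lt_succ_iff] at h
      show a * esymmList l t + esymmList l (t + 1) = 0
      rw [ih t h, ih (t + 1) (by omega), mul_zero, add_zero]

theorem cV_triangular_recurrence (v w : ℤ → K) (α β : ℤ) (n k : ℤ)
    (hn : 1 ≤ n) (hk0 : 0 ≤ k) (hkn : k ≤ n) :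
    cV v w α β n k =
      cV v w α (β + 1) (n - 1) (k - 1) +
        v (α + n - 1) * w β * cV v w α (β + 1) (n - 1) k := by
  lift n to ℕ using (by omega)
  lift k to ℕ using hk0
  obtain ⟨m, rfl⟩ : ∃ m : ℕ, n = m + 1 := ⟨n - 1, by omega⟩
  have hk : k ≤ m + 1 := by exact_mod_cast hkn
  have hm1 : ((m : ℤ) + 1 - 1) = (m : ℤ) := by ring
  push_cast
  -- the tail list
  have hlist :
      (List.ofFn fun j : Fin ((m + 1 : ℤ)).toNat =>
        v (α + (m + 1 : ℤ) - 1 - (j : ℕ)) * w (β + (j : ℕ))) =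
      (v (α + (m + 1 : ℤ) - 1) * w β) ::
      (List.ofFn fun j : Fin ((m : ℤ)).toNat =>
        v (α + (m : ℤ) - 1 - (j : ℕ)) * w ((β + 1) + (j : ℕ))) := by
    have h1 : ((m + 1 : ℤ)).toNat = ((m : ℤ)).toNat + 1 := by omega
    rw [h1, List.ofFn_succ]
    congr 1
    · norm_num
    · refine congrArg List.ofFn (funext fun i => ?_)
      have hs : ((Fin.succ i : Fin (((m : ℤ)).toNat + 1)) : ℕ) = (i : ℕ) + 1 := rfl
      have e1 : α + ((m : ℤ) + 1) - 1 - ((((i : ℕ) + 1 : ℕ)) : ℤ) = α + (m : ℤ) - 1 - ((i : ℕ) : ℤ) := by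
        push_cast; ring
      have e2 : β + ((((i : ℕ) + 1 : ℕ)) : ℤ) = β + 1 + ((i : ℕ) : ℤ) := by
        push_cast; ring
      simp only [Function.comp, hs, e1, e2]
  rcases Nat.lt_or_ge k (m + 1) with hlt | hge
  · -- k < m + 1, so k ≤ m
    have hkm : k ≤ m := by omega
    have hd : ((m + 1 : ℤ) - k).toNat = (m - k) + 1 := by omega
    rw [cV, if_pos ⟨by positivity, by exact_mod_cast hkn⟩, hd, hlist]
    show (v (α + (m + 1 : ℤ) - 1) * w β) * esymmList _ (m - k) + esymmList _ (m - k + 1) = _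
    rcases Nat.eq_zero_or_pos k with rfl | hk1
    · -- k = 0
      rw [cV, if_neg ?hneg]
      case hneg => push_cast; simp
      rw [cV, if_pos ⟨le_refl _, by push_cast; omega⟩]
      rw [esymmList_eq_zero _ (m - 0 + 1) (by simp)]
      rw [hm1]
      have : ((m : ℤ) - (0 : ℕ)).toNat = m - 0 := by simp
      rw [this]
      push_cast
      ring
    · -- 1 ≤ k ≤ m
      rw [cV, if_pos ⟨by push_cast; omega, by push_cast; omega⟩]
      rw [cV, if_pos ⟨by positivity, by push_cast; omega⟩]
      rw [hm1]
      have h2 : ((m : ℤ) - ((k : ℤ) - 1)).toNat = m - k + 1 := by omega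
      have h3 : ((m : ℤ) - k).toNat = m - k := by omega
      rw [h2, h3]
      push_cast
      ring
  · -- k = m + 1
    have : k = m + 1 := by omega
    subst this
    rw [cV, if_pos ⟨by positivity, le_refl _⟩]
    rw [cV, if_pos ⟨by push_cast; omega, by push_cast; omega⟩]
    rw [cV, if_neg (by push_cast; omega)]
    have h1 : (((m : ℤ) + 1) - ((m : ℤ) + 1)).toNat = 0 := by omega
    have h2 : (((m : ℤ) + 1 - 1) - (((m : ℤ) + 1) - 1)).toNat = 0 := by omega
    push_cast
    rw [h1, h2]
    have he : ∀ l : List K, esymmList l 0 = 1 := fun l => by cases l <;> rfl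
    rw [he, he]
    ring
end

section
/- Let K be a commutative ring with unity, let v, w : ℤ → K, and let α, β ∈ ℤ. For all integers n ≥ 1 and 0 ≤ k ≤ n, the V-Stirling numbers of the second kind satisfy the triangular recurrence S^V_{α,β}[n,k] = S^V_{α,β+1}[n-1,k-1] + v(α+k)·w(β)·S^V_{α,β}[n-1,k]. -/
open Finset Polynomial

variable {K : Type*} [CommRing K]

lemma hsymmList_zero (l : List K) : hsymmList l 0 = 1 := by
  cases l <;> simp [hsymmList]

lemma hsymmList_nil_succ (t : ℕ) : hsymmList ([] : List K) (t + 1) = 0 := by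
  simp [hsymmList]

lemma hsymmList_cons_succ (a : K) (l : List K) (t : ℕ) :
    hsymmList (a :: l) (t + 1) = a * hsymmList (a :: l) t + hsymmList l (t + 1) := by
  rw [hsymmList]

theorem SV_triangular_recurrence (v w : ℤ → K) (α β : ℤ) (n k : ℤ)
    (hn : 1 ≤ n) (hk0 : 0 ≤ k) (hkn : k ≤ n) :
    SV v w α β n k =
      SV v w α (β + 1) (n - 1) (k - 1) +
        v (α + k) * w β * SV v w α β (n - 1) k := by
  rcases eq_or_lt_of_le hkn with heq | hlt
  · -- n = k
    subst heq
    have hk1 : (1:ℤ) ≤ k := hn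
    rw [SV, SV, SV, if_pos ⟨hk0, le_refl _⟩, if_pos ⟨by omega, by omega⟩, if_neg (by omega)]
    have h1 : (k - k).toNat = 0 := by omega
    have h2 : (k - 1 - (k - 1)).toNat = 0 := by omega
    rw [h1, h2, hsymmList_zero, hsymmList_zero]
    ring
  · -- k < n
    set t := (n - 1 - k).toNat with htdef
    have ht : (n - k).toNat = t + 1 := by omega
    have ht2 : (n - 1 - k).toNat = t := rfl
    by_cases hk : k = 0
    · subst hk
      rw [SV, SV, SV, if_pos ⟨le_refl _, hk0.trans hkn⟩, if_neg (by omega),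
        if_pos ⟨le_refl _, by omega⟩]
      have hl : (List.ofFn fun j : Fin ((0:ℤ).toNat + 1) =>
          v (α + 0 - (j : ℕ)) * w (β + (j : ℕ))) = [v α * w β] := by
        simp
      rw [hl, ht, ht2, hsymmList_cons_succ, hsymmList_nil_succ]
      ring_nf
    · -- 1 ≤ k
      have hk1 : (1:ℤ) ≤ k := by omega
      have hm : k.toNat = (k - 1).toNat + 1 := by omega
      rw [SV, SV, SV, if_pos ⟨hk0, hkn⟩, if_pos ⟨by omega, by omega⟩,
        if_pos ⟨hk0, by omega⟩, ht, ht2]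
      have hnk : (n - 1 - (k - 1)).toNat = t + 1 := by omega
      rw [hnk]
      rw [show (List.ofFn fun j : Fin (k.toNat + 1) =>
          v (α + k - (j : ℕ)) * w (β + (j : ℕ))) =
          (v (α + k) * w β) :: (List.ofFn fun i : Fin k.toNat =>
            v (α + k - ((i : ℕ) + 1)) * w (β + ((i : ℕ) + 1))) from by
        rw [List.ofFn_succ]
        congr 1
        norm_num]
      rw [hsymmList_cons_succ]
      have hlist : (List.ofFn fun j : Fin ((k - 1).toNat + 1) =>
          v (α + (k - 1) - (j : ℕ)) * w ((β + 1) + (j : ℕ))) =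
          (List.ofFn fun i : Fin k.toNat =>
            v (α + k - ((i : ℕ) + 1)) * w (β + ((i : ℕ) + 1))) := by
        apply List.ext_getElem
        · simp only [List.length_ofFn]; omega
        · intro i h1 h2
          simp only [List.getElem_ofFn]
          congr 2
          · omega
          · omega
      rw [hlist]
      ring
end

section
/- Let K be a commutative ring with unity, let v, w : ℤ → K, and let α, β ∈ ℤ. For all integers 0 ≤ k ≤ n, the V-Stirling numbers of the first kind satisfy the vertical recurrence c^V_{α,β}[n+1,k+1] = ∑_{j=k}^{n} (∏_{t=j+1}^{n} v(α+t)·w(β+n-t)) · c^V_{α,β+n-j+1}[j,k]. -/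
open Finset Polynomial

variable {K : Type*} [CommRing K]

lemma esymmList_zero (l : List K) : esymmList l 0 = 1 := by cases l <;> rfl

lemma cV_cast (v w : ℤ → K) (α β : ℤ) (n k : ℕ) (h : k ≤ n) :
    cV v w α β n k =
      esymmList (List.ofFn fun j : Fin n => v (α + n - 1 - (j : ℕ)) * w (β + (j : ℕ))) (n - k) := by
  unfold cV
  rw [if_pos ⟨by positivity, by exact_mod_cast h⟩]
  simp only [Int.toNat_natCast]
  congr 1
  omega

lemma cV_diag (v w : ℤ → K) (α β : ℤ) (n : ℕ) : cV v w α β n n = 1 := by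
  rw [cV_cast v w α β n n le_rfl, Nat.sub_self, esymmList_zero]

lemma cV_gt (v w : ℤ → K) (α β : ℤ) (n k : ℕ) (h : n < k) : cV v w α β n k = 0 := by
  unfold cV
  rw [if_neg]
  omega

lemma cV_rec (v w : ℤ → K) (α β : ℤ) (n k : ℕ) (hk : k ≤ n) :
    cV v w α β ((n : ℤ) + 1) ((k : ℤ) + 1) =
      v (α + n) * w β * cV v w α (β + 1) n (k + 1) + cV v w α (β + 1) n k := by
  have h1 : ((n : ℤ) + 1) = ((n + 1 : ℕ) : ℤ) := by push_cast; ring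
  have h2 : ((k : ℤ) + 1) = ((k + 1 : ℕ) : ℤ) := by push_cast; ring
  rw [h1, h2, cV_cast v w α β (n + 1) (k + 1) (by omega)]
  have hL : (List.ofFn fun j : Fin (n + 1) =>
        v (α + ((n : ℕ) + 1 : ℕ) - 1 - (j : ℕ)) * w (β + (j : ℕ)))
      = (v (α + n) * w β) ::
        (List.ofFn fun j : Fin n => v (α + n - 1 - (j : ℕ)) * w ((β + 1) + (j : ℕ))) := by
    rw [List.ofFn_succ]
    congr 1
    · congr 1
      · congr 1; simp; push_cast; ring
      · congr 1; simp
    · apply congrArg List.ofFn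
      funext j
      simp only [Function.comp, Fin.val_succ]
      congr 1
      · congr 1; push_cast; ring
      · congr 1; push_cast; ring
  rw [hL]
  rcases Nat.lt_or_ge k n with hkn | hkn
  · have : n + 1 - (k + 1) = (n - (k + 1)) + 1 := by omega
    rw [this]
    show _ * esymmList _ (n - (k+1)) + esymmList _ ((n - (k+1)) + 1) = _
    have : (n - (k+1)) + 1 = n - k := by omega
    rw [this, cV_cast v w α (β+1) n (k+1) (by omega), cV_cast v w α (β+1) n k hk]
  · have hk' : n = k := le_antisymm hkn hk
    subst hk'
    rw [Nat.sub_self, esymmList_zero, cV_diag, cV_gt v w α (β+1) _ _ (Nat.lt_succ_self _)]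
    ring

theorem cV_vertical_recurrence (v w : ℤ → K) (α β : ℤ) (n k : ℕ) (hkn : k ≤ n) :
    cV v w α β (n + 1) (k + 1) =
      ∑ j ∈ Finset.Icc k n,
        (∏ t ∈ Finset.Icc (j + 1) n, v (α + (t : ℕ)) * w (β + (n : ℤ) - (t : ℕ))) *
          cV v w α (β + (n : ℤ) - (j : ℕ) + 1) (j : ℕ) (k : ℕ) := by
  induction n generalizing β k with
  | zero =>
    interval_cases k
    have h1 : cV v w α β 1 1 = 1 := by simpa using cV_diag v w α β 1
    have h2 : cV v w α (β + 1) 0 0 = 1 := by simpa using cV_diag v w α (β + 1) 0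
    simp [h1, h2, show Finset.Icc 1 0 = (∅ : Finset ℕ) from rfl]
  | succ n ih =>
    rcases Nat.lt_or_ge k (n + 1) with hk | hk
    · have hk' : k ≤ n := by omega
      rw [cV_rec v w α β (n + 1) k (by omega),
        show (((n+1:ℕ)):ℤ) = (n : ℤ) + 1 from by push_cast; ring,
        ih (β + 1) k hk',
        Finset.sum_Icc_succ_top (show k ≤ n + 1 by omega), Finset.mul_sum]
      congr 1
      · apply Finset.sum_congr rfl
        intro j hj
        have hjn : j ≤ n := (Finset.mem_Icc.mp hj).2
        rw [Finset.prod_Icc_succ_top (show j + 1 ≤ n + 1 by omega)]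
        have e1 : v (α + ((n+1:ℕ) : ℤ)) * w (β + ((n+1:ℕ):ℤ) - ((n+1:ℕ):ℤ)) = v (α + ((n+1:ℕ):ℤ)) * w β := by
          congr 1; congr 1; push_cast; ring
        have e3 : cV v w α (β + ((n+1:ℕ):ℤ) - (j:ℤ) + 1) j k
            = cV v w α (β + 1 + (n:ℤ) - (j:ℤ) + 1) j k := by
          congr 1; push_cast; ring
        push_cast at e1 e3 ⊢
        rw [e1, e3]
        rw [show (∏ t ∈ Finset.Icc (j + 1) n, v (α + (t:ℤ)) * w (β + ((n:ℤ) + 1) - (t:ℤ)))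
          = ∏ t ∈ Finset.Icc (j + 1) n, v (α + (t:ℤ)) * w (β + 1 + (n:ℤ) - (t:ℤ)) from
          Finset.prod_congr rfl fun t _ => by rw [show β + ((n:ℤ) + 1) - (t:ℤ) = β + 1 + (n:ℤ) - (t:ℤ) from by ring]]
        ring
      · rw [Finset.Icc_eq_empty (by omega : ¬ (n + 1 + 1 ≤ n + 1)), Finset.prod_empty, one_mul]
        congr 1
        push_cast; ring
    · have hk' : k = n + 1 := by omega
      subst hk'
      rw [show ((n+1:ℕ):ℤ) + 1 = ((n+2:ℕ):ℤ) from by push_cast; ring, cV_diag,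
        Finset.Icc_self, Finset.sum_singleton,
        Finset.Icc_eq_empty (by omega : ¬ (n + 1 + 1 ≤ n + 1)), Finset.prod_empty, one_mul, cV_diag]
end

section
/- Let K be a commutative ring with unity, let v, w : ℤ → K, and let α, β ∈ ℤ. For all integers 0 ≤ k ≤ n, the V-Stirling numbers of the second kind satisfy the vertical recurrence S^V_{α,β}[n+1,k+1] = ∑_{j=k}^{n} (v(α+k+1)·w(β))^{n-j} · S^V_{α,β+1}[j,k]. -/
open Finset Polynomial

variable {K : Type*} [CommRing K]

theorem SV_vertical_recurrence (v w : ℤ → K) (α β : ℤ) (n k : ℕ) (hkn : k ≤ n) :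
    SV v w α β (n + 1) (k + 1) =
      ∑ j ∈ Finset.Icc k n,
        (v (α + (k : ℕ) + 1) * w β) ^ (n - j) * SV v w α (β + 1) (j : ℕ) (k : ℕ) := by
  have hcons : ∀ (a : K) (l : List K) (t : ℕ),
      hsymmList (a :: l) t = ∑ s ∈ Finset.range (t + 1), a ^ s * hsymmList l (t - s) := by
    intro a l t
    induction t with
    | zero => simp [hsymmList]
    | succ t ih =>
      rw [hsymmList, ih]
      conv_rhs => rw [Finset.sum_range_succ']
      rw [Finset.mul_sum]
      simp only [pow_succ, pow_zero, one_mul, Nat.succ_sub_succ, Nat.sub_zero]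
      exact congrArg₂ (· + ·) (Finset.sum_congr rfl fun x _ => by ring) rfl
  set a : K := v (α + (k : ℕ) + 1) * w β with ha
  set l : List K := List.ofFn fun i : Fin (k + 1) =>
    v (α + (k : ℕ) - (i : ℕ)) * w (β + 1 + (i : ℕ)) with hl
  have hLHS : SV v w α β (n + 1) (k + 1) = hsymmList (a :: l) (n - k) := by
    rw [SV, if_pos ⟨by positivity, by omega⟩]
    have h1 : ((k : ℤ) + 1).toNat + 1 = (k + 1) + 1 := by omega
    have h2 : (((n : ℤ) + 1) - ((k : ℤ) + 1)).toNat = n - k := by omega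
    rw [h2, h1, List.ofFn_succ]
    refine congrArg₂ hsymmList (congrArg₂ List.cons ?_ ?_) rfl
    · simp only [Fin.val_zero, Nat.cast_zero, sub_zero, add_zero]
      rw [ha, add_assoc]
    · rw [hl]
      refine congrArg List.ofFn (funext fun i => ?_)
      rw [Fin.val_succ]
      push_cast
      refine congrArg₂ (· * ·) (congrArg v ?_) (congrArg w ?_) <;> ring
  rw [hLHS, hcons]
  have hcard : ∀ j ∈ Finset.Icc k n, SV v w α (β + 1) (j : ℕ) (k : ℕ) = hsymmList l (j - k) := by
    intro j hj
    simp only [Finset.mem_Icc] at hj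
    rw [SV, if_pos ⟨by positivity, by exact_mod_cast hj.1⟩]
    have h2 : ((j : ℤ) - (k : ℤ)).toNat = j - k := by omega
    rw [h2]
    refine congrArg₂ hsymmList ?_ rfl
    simp [hl]
  refine Finset.sum_nbij' (fun s => n - s) (fun j => n - j) ?_ ?_ ?_ ?_ ?_
  · intro s hs; simp only [Finset.mem_range] at hs; simp only [Finset.mem_Icc]; omega
  · intro j hj; simp only [Finset.mem_Icc] at hj; simp only [Finset.mem_range]; omega
  · intro s hs; simp only [Finset.mem_range] at hs; show n - (n - s) = s; omega
  · intro j hj; simp only [Finset.mem_Icc] at hj; show n - (n - j) = j; omega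
  · intro s hs; simp only [Finset.mem_range] at hs
    rw [hcard (n - s) (Finset.mem_Icc.mpr (by omega))]
    have h1 : n - (n - s) = s := by omega
    have h2 : n - s - k = n - k - s := by omega
    rw [h1, h2]
end

section
/- Let K be a commutative ring with unity, let v, w : ℤ → K, and let α, β ∈ ℤ. For every natural number k, the following identity holds in the formal power series ring K[[X]]: (∑_{n≥k} S^V_{α,β}[n,k] · X^n) · ∏_{j=0}^{k} (1 - v(α+k-j)·w(β+j)·X) = X^k. -/
open Finset Polynomial

variable {K : Type*} [CommRing K]

/-!
Since `S[n,k] = h_{n-k}(a₀, …, a_k)` with `aⱼ = v(α+k-j)w(β+j)`, the series is `X^k · ∑ hₘ Xᵐ`, and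
`∑ hₘ(l) Xᵐ` is the inverse of `∏_{a ∈ l} (1 - aX)`: the recursion
`hₘ₊₁(a :: l) = a·hₘ(a :: l) + hₘ₊₁(l)` says that multiplying by `1 - aX` removes `a` from the alphabet.
-/

lemma mk_hsymmList_cons_mul_one_sub (a : K) (l : List K) :
    (PowerSeries.mk fun n => hsymmList (a :: l) n) * (1 - PowerSeries.C a * PowerSeries.X) =
      PowerSeries.mk fun n => hsymmList l n := by
  ext n
  rw [mul_sub, mul_one, map_sub, ← mul_assoc, mul_comm _ (PowerSeries.C a)]
  cases n with
  | zero => simp [hsymmList]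
  | succ m => simp [PowerSeries.coeff_succ_mul_X, hsymmList]

lemma mk_hsymmList_mul_prod_one_sub (l : List K) :
    (PowerSeries.mk fun n => hsymmList l n) *
      (l.map fun a => 1 - PowerSeries.C a * PowerSeries.X).prod = 1 := by
  induction l with
  | nil =>
    ext n
    cases n <;> simp [hsymmList]
  | cons a l ih =>
    rw [List.map_cons, List.prod_cons, ← mul_assoc, mk_hsymmList_cons_mul_one_sub, ih]

lemma SV_natCast (v w : ℤ → K) (α β : ℤ) (n k : ℕ) :
    SV v w α β n k =
      if k ≤ n then
        hsymmList (List.ofFn fun j : Fin (k + 1) => v (α + (k : ℕ) - (j : ℕ)) * w (β + (j : ℕ)))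
          (n - k)
      else 0 := by
  by_cases h : k ≤ n
  · rw [SV, if_pos ⟨Int.natCast_nonneg k, Int.ofNat_le.mpr h⟩, if_pos h, Int.toNat_sub n k]
    rfl
  · rw [SV, if_neg (by omega), if_neg h]

lemma mk_SV_eq_mk_hsymmList_mul_X_pow (v w : ℤ → K) (α β : ℤ) (k : ℕ) :
    (PowerSeries.mk fun n : ℕ => SV v w α β n k) =
      (PowerSeries.mk fun n => hsymmList (List.ofFn fun j : Fin (k + 1) =>
        v (α + (k : ℕ) - (j : ℕ)) * w (β + (j : ℕ))) n) * PowerSeries.X ^ k := by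
  ext n
  rw [PowerSeries.coeff_mk, PowerSeries.coeff_mul_X_pow', SV_natCast, PowerSeries.coeff_mk]

theorem SV_generating_function (v w : ℤ → K) (α β : ℤ) (k : ℕ) :
    (PowerSeries.mk fun n : ℕ => SV v w α β (n : ℕ) (k : ℕ)) *
        ∏ j ∈ Finset.range (k + 1),
          (1 - PowerSeries.C (v (α + (k : ℕ) - (j : ℕ)) * w (β + (j : ℕ))) * PowerSeries.X) =
      PowerSeries.X ^ k := by
  set f : ℕ → K := fun j => v (α + (k : ℕ) - (j : ℕ)) * w (β + (j : ℕ))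
  have hprod : ∏ j ∈ Finset.range (k + 1), (1 - PowerSeries.C (f j) * PowerSeries.X) =
      ((List.ofFn fun j : Fin (k + 1) => f j).map
        fun a => 1 - PowerSeries.C a * PowerSeries.X).prod := by
    rw [List.map_ofFn, List.prod_ofFn]
    exact (Fin.prod_univ_eq_prod_range _ _).symm
  rw [hprod, mk_SV_eq_mk_hsymmList_mul_X_pow, mul_right_comm, mk_hsymmList_mul_prod_one_sub,
    one_mul]
end

section
/- Let K be a commutative ring with unity, let v, w : ℤ → K, and let α, β ∈ ℤ. For every natural number n, the following identity holds in the polynomial ring K[X]: X^n = ∑_{k=0}^{n} S^V_{α,β-k}[n,k] · ∏_{i=0}^{k-1} (X - v(α+i)·w(β-i)). -/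
open Finset Polynomial

variable {K : Type*} [CommRing K]

lemma hsymmList_nil (t : ℕ) : hsymmList ([] : List K) (t+1) = 0 := by rw [hsymmList]
lemma hsymmList_cons (a : K) (l : List K) (t : ℕ) :
    hsymmList (a :: l) (t+1) = a * hsymmList (a :: l) t + hsymmList l (t+1) := by
  rw [hsymmList]

/-- `a_k = v(α+k)·w(β-k)`, the root sequence. -/
def aV (v w : ℤ → K) (α β : ℤ) (k : ℕ) : K := v (α + (k:ℕ)) * w (β - (k:ℕ))

/-- Recursively-defined V-Stirling numbers of the second kind (with shifted β). -/
def T (v w : ℤ → K) (α β : ℤ) : ℕ → ℕ → K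
  | 0, 0 => 1
  | 0, _+1 => 0
  | n+1, 0 => aV v w α β 0 * T v w α β n 0
  | n+1, k+1 => aV v w α β (k+1) * T v w α β n (k+1) + T v w α β n k

lemma T_zero (v w : ℤ → K) (α β : ℤ) (n k : ℕ) (h : n < k) : T v w α β n k = 0 := by
  induction n generalizing k with
  | zero => cases k with
    | zero => omega
    | succ m => rfl
  | succ n ih =>
    cases k with
    | zero => omega
    | succ m =>
      show aV v w α β (m+1) * T v w α β n (m+1) + T v w α β n m = 0
      rw [ih _ (by omega), ih _ (by omega)]; ring

lemma T_eq_h (v w : ℤ → K) (α β : ℤ) (n k : ℕ) (hk : k ≤ n) :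
    T v w α β n k = hsymmList (List.ofFn fun j : Fin (k+1) =>
      v (α + (k:ℕ) - (j:ℕ)) * w (β - (k:ℕ) + (j:ℕ))) (n - k) := by
  induction n generalizing k with
  | zero =>
    interval_cases k
    simp [T, hsymmList_zero]
  | succ n ih =>
    cases k with
    | zero =>
      show aV v w α β 0 * T v w α β n 0 = _
      rw [ih 0 (by omega)]
      have hl : (List.ofFn fun j : Fin (0+1) =>
        v (α + ((0:ℕ):ℤ) - (j:ℕ)) * w (β - ((0:ℕ):ℤ) + (j:ℕ))) = [v α * w β] := by
        simp
      rw [hl]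
      show v (α + ((0:ℕ):ℤ)) * w (β - ((0:ℕ):ℤ)) * hsymmList [v α * w β] (n - 0) = _
      rw [Nat.sub_zero, show n + 1 - 0 = n + 1 from rfl, hsymmList_cons, hsymmList_nil]
      simp
    | succ m =>
      have hcons : (List.ofFn fun j : Fin (m+1+1) =>
          v (α + ((m+1:ℕ):ℤ) - (j:ℕ)) * w (β - ((m+1:ℕ):ℤ) + (j:ℕ))) =
          (v (α + ((m+1:ℕ):ℤ)) * w (β - ((m+1:ℕ):ℤ))) ::
          (List.ofFn fun j : Fin (m+1) =>
            v (α + ((m:ℕ):ℤ) - (j:ℕ)) * w (β - ((m:ℕ):ℤ) + (j:ℕ))) := by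
        rw [List.ofFn_succ]
        congr 1
        · simp
        · congr 1
          funext j
          congr 1
          · congr 1; push_cast [Fin.val_succ]; ring
          · congr 1; push_cast [Fin.val_succ]; ring
      rcases Nat.lt_or_ge m n with hmn | hmn
      · show aV v w α β (m+1) * T v w α β n (m+1) + T v w α β n m = _
        rw [ih (m+1) (by omega), ih m (by omega)]
        rw [show n + 1 - (m+1) = (n - (m+1)) + 1 by omega, hcons, hsymmList_cons, ← hcons]
        rw [show n - (m+1) + 1 = n - m by omega]
        rfl
      · have hm : m = n := by omega
        subst hm
        show aV v w α β (m+1) * T v w α β m (m+1) + T v w α β m m = _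
        rw [T_zero _ _ _ _ _ (m+1) (by omega), ih m le_rfl]
        simp [hsymmList_zero]

lemma main_T (v w : ℤ → K) (α β : ℤ) (n : ℕ) :
    (Polynomial.X : Polynomial K) ^ n =
      ∑ k ∈ Finset.range (n + 1), Polynomial.C (T v w α β n k) *
        ∏ i ∈ Finset.range k,
          (Polynomial.X - Polynomial.C (v (α + (i : ℕ)) * w (β - (i : ℕ)))) := by
  induction n with
  | zero => simp [T]
  | succ n ih =>
    set P : ℕ → Polynomial K := fun k => ∏ i ∈ Finset.range k,
      (Polynomial.X - Polynomial.C (v (α + (i : ℕ)) * w (β - (i : ℕ)))) with hP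
    have hPsucc : ∀ k, P (k+1) = P k * (X - C (aV v w α β k)) := fun k =>
      Finset.prod_range_succ _ k
    have h0 : T v w α β (n+1) 0 = aV v w α β 0 * T v w α β n 0 := rfl
    have hs : ∀ k, T v w α β (n+1) (k+1)
        = aV v w α β (k+1) * T v w α β n (k+1) + T v w α β n k := fun k => rfl
    calc (X : Polynomial K) ^ (n+1)
        = (∑ k ∈ Finset.range (n+1), C (T v w α β n k) * P k) * X := by rw [← ih]; ring
      _ = ∑ k ∈ Finset.range (n+1), (C (T v w α β n k) * P (k+1)
            + C (aV v w α β k * T v w α β n k) * P k) := by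
          rw [Finset.sum_mul]
          refine Finset.sum_congr rfl fun k _ => ?_
          rw [hPsucc k, C_mul]; ring
      _ = ∑ k ∈ Finset.range (n+1), C (T v w α β n k) * P (k+1)
            + (∑ k ∈ Finset.range n, C (aV v w α β (k+1) * T v w α β n (k+1)) * P (k+1)
               + C (aV v w α β 0 * T v w α β n 0) * P 0) := by
          rw [Finset.sum_add_distrib,
            Finset.sum_range_succ' (fun k => C (aV v w α β k * T v w α β n k) * P k) n]
      _ = ∑ k ∈ Finset.range (n+1+1), C (T v w α β (n+1) k) * P k := by
          rw [Finset.sum_range_succ' (fun k => C (T v w α β (n+1) k) * P k) (n+1)]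
          simp only [hs, h0, C_add, C_mul, add_mul, Finset.sum_add_distrib]
          rw [Finset.sum_range_succ
            (fun k => C (aV v w α β (k+1)) * C (T v w α β n (k+1)) * P (k+1)) n]
          rw [T_zero v w α β n (n+1) (by omega)]
          simp only [map_zero, mul_zero, zero_mul, add_zero]
          ring

lemma SV_eq_T (v w : ℤ → K) (α β : ℤ) (n k : ℕ) (hk : k ≤ n) :
    SV v w α (β - (k:ℕ)) (n:ℕ) (k:ℕ) = T v w α β n k := by
  rw [SV, if_pos ⟨by exact_mod_cast k.zero_le, by exact_mod_cast hk⟩]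
  rw [T_eq_h v w α β n k hk]
  rw [show ((n:ℤ) - (k:ℤ)).toNat = n - k by omega]
  congr 1

theorem SV_newton_expansion (v w : ℤ → K) (α β : ℤ) (n : ℕ) :
    (Polynomial.X : Polynomial K) ^ n =
      ∑ k ∈ Finset.range (n + 1),
        Polynomial.C (SV v w α (β - (k : ℕ)) (n : ℕ) (k : ℕ)) *
          ∏ i ∈ Finset.range k,
            (Polynomial.X - Polynomial.C (v (α + (i : ℕ)) * w (β - (i : ℕ)))) := by
  rw [main_T v w α β n]
  refine Finset.sum_congr rfl fun k hk => ?_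
  rw [SV_eq_T v w α β n k (by simpa using Nat.lt_succ_iff.mp (Finset.mem_range.mp hk))]
end

section
/- Let K be a commutative ring with unity, let v, w : ℤ → K, and let α, β ∈ ℤ. For all natural numbers m₁, m₂, and n, the V-Stirling numbers of the first kind satisfy the convolution identity c^V_{α,β}[m₁+m₂, n] = ∑_{k=0}^{n} c^V_{α+m₂,β}[m₁, n-k] · c^V_{α,β+m₁}[m₂, k]. -/
open Finset Polynomial

variable {K : Type*} [CommRing K]

/-!
By Vieta, `c^V_{α,β}[N,k]` is the coefficient of `X^k` in `∏_{j<N} (X + v(α+N-1-j) w(β+j))`.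
Splitting the product for `N = m₁ + m₂` after the first `m₁` factors gives exactly the
products for `(α+m₂, β, m₁)` and `(α, β+m₁, m₂)`, and the convolution is the Cauchy product
of their coefficients.
-/

theorem Multiset.esymm_cons_succ {R : Type*} [CommSemiring R] (a : R) (s : Multiset R) (t : ℕ) :
    (a ::ₘ s).esymm (t + 1) = a * s.esymm t + s.esymm (t + 1) := by
  simp only [Multiset.esymm, Multiset.powersetCard_cons, Multiset.map_add, Multiset.sum_add,
    Multiset.map_map, Function.comp_def, Multiset.prod_cons, Multiset.sum_map_mul_left]
  exact add_comm _ _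

theorem esymmList_eq_esymm : ∀ (l : List K) (t : ℕ), esymmList l t = (l : Multiset K).esymm t
  | _, 0 => by simp [esymmList, Multiset.esymm]
  | [], t + 1 => by simp [esymmList, Multiset.esymm, Multiset.powersetCard_zero_right]
  | a :: l, t + 1 => by
    rw [esymmList, esymmList_eq_esymm l t, esymmList_eq_esymm l (t + 1), ← Multiset.cons_coe,
      Multiset.esymm_cons_succ]

theorem Polynomial.natDegree_prod_X_add_C_le {ι : Type*} (s : Finset ι) (f : ι → K) :
    (∏ i ∈ s, (X + C (f i))).natDegree ≤ s.card := by
  refine (natDegree_prod_le _ _).trans ?_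
  simpa using Nat.mul_le_mul_left s.card natDegree_X_le

noncomputable def cVPoly (v w : ℤ → K) (α β : ℤ) (N : ℕ) : K[X] :=
  ∏ j ∈ range N, (X + C (v (α + N - 1 - j) * w (β + j)))

theorem coeff_cVPoly (v w : ℤ → K) (α β : ℤ) (N k : ℕ) :
    (cVPoly v w α β N).coeff k = cV v w α β N k := by
  unfold cV
  split_ifs with hk
  · set s : Multiset K :=
      ↑(List.ofFn fun j : Fin N => v (α + N - 1 - (j : ℕ)) * w (β + (j : ℕ)))
    have hcard : Multiset.card s = N := by simp [s]
    have hprod : cVPoly v w α β N = (s.map fun a => X + C a).prod := by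
      rw [cVPoly, ← Fin.prod_univ_eq_prod_range]
      simp [s, List.prod_ofFn]
    rw [hprod, Multiset.prod_X_add_C_coeff s (by omega), hcard, esymmList_eq_esymm,
      Int.toNat_natCast, show ((N : ℤ) - k).toNat = N - k by omega]
  · exact coeff_eq_zero_of_natDegree_lt <|
      (natDegree_prod_X_add_C_le _ _).trans_lt (by simp only [card_range]; omega)

theorem cVPoly_add (v w : ℤ → K) (α β : ℤ) (m₁ m₂ : ℕ) :
    cVPoly v w α β (m₁ + m₂) = cVPoly v w (α + m₂) β m₁ * cVPoly v w α (β + m₁) m₂ := by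
  unfold cVPoly
  rw [prod_range_add]
  congr 1 <;> refine prod_congr rfl fun j _ => ?_ <;> push_cast <;> ring_nf

theorem cV_convolution (v w : ℤ → K) (α β : ℤ) (m₁ m₂ n : ℕ) :
    cV v w α β ((m₁ : ℕ) + (m₂ : ℕ)) (n : ℕ) =
      ∑ k ∈ Finset.range (n + 1),
        cV v w (α + (m₂ : ℕ)) β (m₁ : ℕ) ((n - k : ℕ)) *
          cV v w α (β + (m₁ : ℕ)) (m₂ : ℕ) (k : ℕ) := by
  rw [← Nat.cast_add, ← coeff_cVPoly, cVPoly_add, coeff_mul, ← Nat.sum_antidiagonal_swap,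
    Nat.sum_antidiagonal_eq_sum_range_succ_mk]
  simp only [Prod.swap_prod_mk, coeff_cVPoly]
end

section
/- Let K be a commutative ring with unity, let v, w : ℤ → K, let α, β ∈ ℤ, and let s, r be natural numbers. Then the (r+1)×(r+1) matrix with (i,j) entry c^V_{α-i,β-j}[s+i+j, s+j] (0 ≤ i, j ≤ r) equals the product of the lower-triangular matrix with (i,j) entry c^V_{α-i,β}[s+i, s+j] and the upper-triangular matrix with (i,j) entry c^V_{α+s,β-j}[j, j-i]; equivalently, for all 0 ≤ i, j ≤ r, c^V_{α-i,β-j}[s+i+j, s+j] = ∑_{k=0}^{r} c^V_{α-i,β}[s+i, s+k] · c^V_{α+s,β-j}[j, j-k]. -/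
open Finset Polynomial

variable {K : Type*} [CommRing K]

lemma esymmList_nil_succ (t : ℕ) : esymmList ([] : List K) (t+1) = 0 := rfl

lemma esymmList_cons (a : K) (l : List K) (t : ℕ) :
    esymmList (a :: l) (t+1) = a * esymmList l t + esymmList l (t+1) := rfl

lemma esymmList_append (l₁ l₂ : List K) (t : ℕ) :
    esymmList (l₁ ++ l₂) t =
      ∑ k ∈ Finset.range (t+1), esymmList l₁ k * esymmList l₂ (t - k) := by
  induction l₁ generalizing t with
  | nil =>
    rw [Finset.sum_range_succ']
    simp [esymmList_nil_succ, esymmList_zero]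
  | cons a l ih =>
    cases t with
    | zero => simp [esymmList_zero]
    | succ t =>
      rw [List.cons_append, esymmList_cons, ih, ih,
        Finset.sum_range_succ' (fun k => esymmList (a::l) k * esymmList l₂ (t+1-k)) (t+1),
        Finset.sum_range_succ' (fun k => esymmList l k * esymmList l₂ (t+1-k)) (t+1)]
      simp only [esymmList_cons, esymmList_zero, one_mul, Nat.succ_sub_succ]
      rw [Finset.mul_sum, ← add_assoc, ← Finset.sum_add_distrib]
      congr 1
      exact Finset.sum_congr rfl fun k _ => by ring

lemma ofFn_eq_ofFn {m n : ℕ} (h : m = n) (f : Fin m → K) (g : Fin n → K)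
    (hfg : ∀ t : ℕ, (ht : t < n) → f ⟨t, h ▸ ht⟩ = g ⟨t, ht⟩) :
    List.ofFn f = List.ofFn g := by
  subst h
  congr 1
  funext t
  exact hfg t t.isLt

lemma cV_nat (v w : ℤ → K) (α β : ℤ) (n k : ℕ) (h : k ≤ n) :
    cV v w α β n k =
      esymmList (List.ofFn fun t : Fin n =>
        v (α + (n : ℤ) - 1 - (t : ℕ)) * w (β + (t : ℕ))) (n - k) := by
  rw [cV, if_pos ⟨Int.natCast_nonneg k, by exact_mod_cast h⟩]
  rw [show ((n : ℤ) - (k : ℤ)).toNat = n - k by omega]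
  exact congrArg (fun l => esymmList l (n - k))
    (ofFn_eq_ofFn (by omega : ((n : ℤ)).toNat = n) _ _ (fun t ht => rfl))

theorem cV_LU_factorization (v w : ℤ → K) (α β : ℤ) (s r : ℕ) :
    (Matrix.of fun i j : Fin (r + 1) =>
        cV v w (α - (i : ℕ)) (β - (j : ℕ)) ((s : ℕ) + (i : ℕ) + (j : ℕ)) ((s : ℕ) + (j : ℕ))) =
      (Matrix.of fun i j : Fin (r + 1) =>
        cV v w (α - (i : ℕ)) β ((s : ℕ) + (i : ℕ)) ((s : ℕ) + (j : ℕ))) *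
      (Matrix.of fun i j : Fin (r + 1) =>
        cV v w (α + (s : ℕ)) (β - (j : ℕ)) ((j : ℕ)) (((j : ℕ) : ℤ) - ((i : ℕ) : ℤ))) := by
  ext i j
  rcases i with ⟨I, hIr⟩
  rcases j with ⟨J, hJr⟩
  rw [Matrix.mul_apply]
  simp only [Matrix.of_apply, Fin.val_mk]
  -- the two lists
  set LA : List K := List.ofFn (fun t : Fin (s + I) =>
    v ((α - (I : ℤ)) + ((s + I : ℕ) : ℤ) - 1 - (t : ℕ)) * w (β + (t : ℕ))) with hLA
  set LB : List K := List.ofFn (fun t : Fin J =>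
    v ((α + (s : ℤ)) + ((J : ℕ) : ℤ) - 1 - (t : ℕ)) * w ((β - (J : ℤ)) + (t : ℕ))) with hLB
  -- LHS
  have hL : cV v w (α - (I : ℕ)) (β - (J : ℕ)) ((s : ℤ) + I + J) ((s : ℤ) + J) =
      esymmList (LB ++ LA) I := by
    have h1 : ((s : ℤ) + I + J) = ((s + I + J : ℕ) : ℤ) := by push_cast; ring
    have h2 : ((s : ℤ) + J) = ((s + J : ℕ) : ℤ) := by push_cast; ring
    rw [h1, h2, cV_nat v w (α - (I : ℤ)) (β - (J : ℤ)) (s + I + J) (s + J) (by omega)]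
    have hlist : (List.ofFn fun t : Fin (s + I + J) =>
        v ((α - (I : ℤ)) + ((s + I + J : ℕ) : ℤ) - 1 - (t : ℕ)) * w ((β - (J : ℤ)) + (t : ℕ)))
        = LB ++ LA := by
      rw [hLA, hLB]
      apply List.ext_getElem
      · simp only [List.length_ofFn, List.length_append]; omega
      · intro t h1 h2
        simp only [List.getElem_ofFn, List.getElem_append, List.length_ofFn]
        by_cases ht : t < J
        · rw [dif_pos ht]
          congr 2 <;> push_cast <;> omega
        · rw [dif_neg ht]
          congr 2 <;> push_cast <;> omega
    rw [hlist]
    congr 1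
    omega
  rw [hL, esymmList_append]
  -- RHS
  rw [Fin.sum_univ_eq_sum_range
    (fun k => cV v w (α - (I : ℕ)) β ((s:ℤ) + I) ((s:ℤ) + k) *
      cV v w (α + (s : ℕ)) (β - (J : ℕ)) J ((J:ℤ) - (k:ℤ)))]
  refine Finset.sum_subset_zero_on_sdiff ?_ ?_ ?_
  · exact Finset.range_subset_range.mpr (by omega)
  · intro k hk
    simp only [Finset.mem_sdiff, Finset.mem_range] at hk
    have hcond : ¬ ((0:ℤ) ≤ (s:ℤ) + k ∧ (s:ℤ) + k ≤ (s:ℤ) + I) := by omega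
    have hz : cV v w (α - (I : ℕ)) β ((s:ℤ) + I) ((s:ℤ) + k) = 0 := if_neg hcond
    rw [hz, zero_mul]
  · intro k hk
    simp only [Finset.mem_range] at hk
    have hkI : k ≤ I := by omega
    symm
    -- first factor
    have h1 : ((s : ℤ) + I) = ((s + I : ℕ) : ℤ) := by push_cast; ring
    have h2 : ((s : ℤ) + k) = ((s + k : ℕ) : ℤ) := by push_cast; ring
    have hf1 : cV v w (α - (I : ℕ)) β ((s:ℤ) + I) ((s:ℤ) + k) = esymmList LA (I - k) := by
      rw [h1, h2, cV_nat v w (α - (I : ℤ)) β (s + I) (s + k) (by omega), hLA]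
      congr 1
      omega
    by_cases hkJ : k ≤ J
    · have h3 : ((J:ℤ) - (k:ℤ)) = ((J - k : ℕ) : ℤ) := by push_cast [hkJ]; ring
      have hf2 : cV v w (α + (s : ℕ)) (β - (J : ℕ)) J ((J:ℤ) - (k:ℤ)) = esymmList LB k := by
        rw [h3, cV_nat v w (α + (s : ℤ)) (β - (J : ℤ)) J (J - k) (by omega), hLB]
        congr 1
        omega
      rw [hf1, hf2]; ring
    · have hcond : ¬ ((0:ℤ) ≤ (J:ℤ) - (k:ℤ) ∧ (J:ℤ) - (k:ℤ) ≤ (J:ℤ)) := by omega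
      have hf2 : cV v w (α + (s : ℕ)) (β - (J : ℕ)) J ((J:ℤ) - (k:ℤ)) = 0 := if_neg hcond
      rw [hf1, hf2, mul_zero, esymmList_eq_zero LB k (by simp [hLB]; omega), zero_mul]
end

section
/- Let K be a commutative ring with unity, let v, w : ℤ → K, let α, β ∈ ℤ, and let s, r be natural numbers. Then the determinant of the (r+1)×(r+1) matrix with (i,j) entry S^V_{α,β-j}[s+i+j, s+j] (0 ≤ i, j ≤ r) equals ∏_{k=0}^{r} (v(α+s+k)·w(β-k))^k. -/
open Finset Polynomial

variable {K : Type*} [CommRing K]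

theorem det_hsymmList_of_cons (r : ℕ) (a : ℕ → K) (L : ℕ → List K)
    (hL : ∀ j, L (j + 1) = a (j + 1) :: L j) :
    Matrix.det (Matrix.of fun i j : Fin (r + 1) => hsymmList (L j) i) =
      ∏ j ∈ range (r + 1), a j ^ j := by
  induction r generalizing a L with
  | zero => simp [hsymmList_zero]
  | succ r ih =>
    let B : Matrix (Fin (r + 2)) (Fin (r + 2)) K := Matrix.of fun i j =>
      Fin.cases (Fin.cases 1 0 j)
        (fun i' => Fin.cases (hsymmList (L 0) (i' + 1))
          (fun j' : Fin (r + 1) => a (j' + 1) * hsymmList (L (j' + 1)) i') j) i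
    have hcol : Matrix.det (Matrix.of fun i j : Fin (r + 2) => hsymmList (L j) i) = B.det := by
      refine Matrix.det_eq_of_forall_col_eq_smul_add_pred (fun _ => 1) (fun i => ?_)
        (fun i j => ?_)
      · cases i using Fin.cases <;> simp [B, hsymmList_zero]
      · cases i using Fin.cases
        · simp [B, hsymmList_zero]
        · simp [B, hL, hsymmList_cons_succ]
    have hminor : (B.submatrix Fin.succ Fin.succ).det = (∏ j : Fin (r + 1), a (j + 1)) *
        Matrix.det (Matrix.of fun i j : Fin (r + 1) => hsymmList (L (j + 1)) i) := by
      rw [← Matrix.det_mul_row]; rfl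
    rw [hcol, Matrix.det_succ_row_zero, Fin.sum_univ_succ, Finset.sum_eq_zero (by simp [B]),
      Fin.succAbove_zero, hminor, ih (a <| · + 1) (L <| · + 1) fun j => hL (j + 1),
      prod_range_succ' (fun j => a j ^ j), Fin.prod_univ_eq_prod_range (a <| · + 1),
      ← prod_mul_distrib]
    simp [B, pow_succ, mul_comm]

def SVArgs (v w : ℤ → K) (α β : ℤ) (k : ℕ) : List K :=
  List.ofFn fun t : Fin (k + 1) => v (α + k - t) * w (β + t)

lemma SVArgs_succ (v w : ℤ → K) (α β : ℤ) (k : ℕ) :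
    SVArgs v w α β (k + 1) = v (α + (k + 1)) * w β :: SVArgs v w α (β + 1) k := by
  rw [SVArgs, List.ofFn_succ]
  congr 1
  · simp
  · congr 1; funext t; simp only [Fin.val_succ]; push_cast; congr 2 <;> ring

lemma SV_natCast_add (v w : ℤ → K) (α β : ℤ) (k i : ℕ) :
    SV v w α β (k + i) k = hsymmList (SVArgs v w α β k) i := by
  simp [SV, SVArgs]

theorem SV_det (v w : ℤ → K) (α β : ℤ) (s r : ℕ) :
    Matrix.det (Matrix.of fun i j : Fin (r + 1) =>
        SV v w α (β - (j : ℕ)) ((s : ℕ) + (i : ℕ) + (j : ℕ)) ((s : ℕ) + (j : ℕ))) =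
      ∏ k ∈ Finset.range (r + 1), (v (α + (s : ℕ) + (k : ℕ)) * w (β - (k : ℕ))) ^ k := by
  have hentry : ∀ i j : ℕ, SV v w α (β - j) ((s : ℕ) + i + j) ((s : ℕ) + j) =
      hsymmList (SVArgs v w α (β - j) (s + j)) i := fun i j => by
    rw [show (s : ℤ) + i + j = ((s + j : ℕ) : ℤ) + (i : ℕ) by push_cast; ring,
      show (s : ℤ) + j = ((s + j : ℕ) : ℤ) by push_cast; ring, SV_natCast_add]
  simp only [hentry]
  refine det_hsymmList_of_cons r (fun k => v (α + s + k) * w (β - k))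
    (fun j => SVArgs v w α (β - j) (s + j)) fun j => ?_
  rw [← add_assoc, SVArgs_succ, show β - ((j + 1 : ℕ) : ℤ) + 1 = β - j by push_cast; ring]
  congr 3
  push_cast
  ring
end
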